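/- Classification of centers of lattice-preserving rotations of order 3: if ρ is a rotation of the plane by 120° whose center c satisfies ρ(L) = L, where L is the vertex set of the triangular lattice, then c is either a lattice vertex or the centroid of a face of the lattice. -/

import Mathlib

/-- The sixth root of unity `ω = e^{iπ/3}` generating the triangular lattice. -/
noncomputable def omg : ℂ := Complex.exp ((Real.pi : ℂ) * Complex.I / 3)

/-- The vertex set of the triangular lattice drawing `G_D`: the Eisenstein integers. -/
def TriLattice : Set ℂ := {z | ∃ a b : ℤ, z = (a : ℂ) + (b : ℂ) * omg}

/-!
The rotation by `120°` is multiplication by `ω² = ω - 1`, so the image `(1 - ω²) c` of `0` lies in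
`L`. Since `(1 + ω)(1 - ω²) = 3`, this gives `3c = m + nω ∈ L` with `m ≡ n (mod 3)`, i.e.
`c = t + r (1 + ω) / 3` with `t ∈ L` and `r ∈ {0, 1, 2}`. For `r = 0` the center is a vertex; for
`r = 1, 2` it is the centroid of the face `{t, t + 1, t + ω}`, resp. `{t + 1, t + ω, t + 1 + ω}`.
-/

open Complex

lemma omg_eq : omg = (1 / 2 : ℝ) + (Real.sqrt 3 / 2 : ℝ) * I := by
  rw [omg, show (Real.pi : ℂ) * I / 3 = (Real.pi / 3 : ℝ) * I by push_cast; ring,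
    exp_mul_I, ← ofReal_cos, ← ofReal_sin, Real.cos_pi_div_three, Real.sin_pi_div_three]

lemma omg_sq : omg ^ 2 = omg - 1 := by
  have h3 : ((Real.sqrt 3 : ℝ) : ℂ) ^ 2 = 3 := by
    norm_cast
    exact Real.sq_sqrt (by norm_num)
  rw [omg_eq]
  push_cast
  linear_combination (I ^ 2 / 4) * h3 + (3 / 4) * I_sq

lemma norm_omg : ‖omg‖ = 1 := by
  rw [omg, show (Real.pi : ℂ) * I / 3 = (Real.pi / 3 : ℝ) * I by push_cast; ring]
  exact norm_exp_ofReal_mul_I _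

lemma norm_one_sub_omg : ‖1 - omg‖ = 1 := by
  rw [show 1 - omg = -omg ^ 2 by rw [omg_sq]; ring, norm_neg, norm_pow, norm_omg, one_pow]

lemma exp_two_pi_I_div_three : exp (2 * Real.pi * I / 3) = omg ^ 2 := by
  rw [omg, ← exp_nat_mul]
  ring_nf

namespace TriLattice

lemma zero_mem : (0 : ℂ) ∈ TriLattice := ⟨0, 0, by simp⟩

lemma one_mem : (1 : ℂ) ∈ TriLattice := ⟨1, 0, by simp⟩

lemma omg_mem : omg ∈ TriLattice := ⟨0, 1, by simp⟩

lemma add_mem {u v : ℂ} (hu : u ∈ TriLattice) (hv : v ∈ TriLattice) : u + v ∈ TriLattice := by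
  obtain ⟨a, b, rfl⟩ := hu
  obtain ⟨a', b', rfl⟩ := hv
  exact ⟨a + a', b + b', by push_cast; ring⟩

end TriLattice

def IsFaceCentroid (c : ℂ) : Prop :=
  ∃ u v w : ℂ, u ∈ TriLattice ∧ v ∈ TriLattice ∧ w ∈ TriLattice ∧
    ‖u - v‖ = 1 ∧ ‖v - w‖ = 1 ∧ ‖u - w‖ = 1 ∧ c = (u + v + w) / 3

open TriLattice in
lemma isFaceCentroid_add_one_add_omg_div_three {t : ℂ} (ht : t ∈ TriLattice) :
    IsFaceCentroid (t + (1 + omg) / 3) := by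
  refine ⟨t, t + 1, t + omg, ht, add_mem ht one_mem, add_mem ht omg_mem, ?_, ?_, ?_, by ring⟩
  · simp
  · rw [show t + 1 - (t + omg) = 1 - omg by ring, norm_one_sub_omg]
  · rw [show t - (t + omg) = -omg by ring, norm_neg, norm_omg]

open TriLattice in
lemma isFaceCentroid_add_two_mul_one_add_omg_div_three {t : ℂ} (ht : t ∈ TriLattice) :
    IsFaceCentroid (t + 2 * (1 + omg) / 3) := by
  refine ⟨t + 1, t + omg, t + 1 + omg, add_mem ht one_mem, add_mem ht omg_mem,
    add_mem (add_mem ht one_mem) omg_mem, ?_, ?_, ?_, by ring⟩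
  · rw [show t + 1 - (t + omg) = 1 - omg by ring, norm_one_sub_omg]
  · simp [show t + omg - (t + 1 + omg) = -1 by ring]
  · rw [show t + 1 - (t + 1 + omg) = -omg by ring, norm_neg, norm_omg]

lemma exists_eq_add_mul_one_add_omg_div_three {c : ℂ} (h : (1 - omg ^ 2) * c ∈ TriLattice) :
    ∃ t ∈ TriLattice, ∃ r : ℤ, 0 ≤ r ∧ r < 3 ∧ c = t + r * (1 + omg) / 3 := by
  obtain ⟨a, b, hab⟩ := h
  -- multiply by `1 + ω`, using `(1 + ω)(1 - ω²) = 3`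
  have h3c : 3 * c = (a - b : ℂ) + (a + 2 * b : ℂ) * omg := by
    linear_combination (1 + omg) * hab + (c * (omg + 2) + b) * omg_sq
  have hm := Int.emod_add_mul_ediv (a - b) 3
  have hn := Int.emod_add_mul_ediv (a + 2 * b) 3
  have hmn : (a + 2 * b) % 3 = (a - b) % 3 := by omega
  rw [hmn] at hn
  refine ⟨((a - b) / 3 : ℤ) + ((a + 2 * b) / 3 : ℤ) * omg, ⟨_, _, rfl⟩, (a - b) % 3,
    Int.emod_nonneg _ (by norm_num), Int.emod_lt_of_pos _ (by norm_num), ?_⟩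
  have hmC : (((a - b) % 3 : ℤ) : ℂ) + 3 * (((a - b) / 3 : ℤ) : ℂ) = a - b := by exact_mod_cast hm
  have hnC : (((a - b) % 3 : ℤ) : ℂ) + 3 * (((a + 2 * b) / 3 : ℤ) : ℂ) = a + 2 * b := by
    exact_mod_cast hn
  linear_combination h3c / 3 - hmC / 3 - hnC / 3 * omg

/-- classification of centers of lattice-preserving rotations of order 3:
the center is a lattice vertex or a face centroid. -/
theorem order_three_center_classification (c : ℂ)
    (h : (fun p => c + Complex.exp (2 * (Real.pi : ℂ) * Complex.I / 3) * (p - c)) '' TriLattice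
        = TriLattice) :
    c ∈ TriLattice ∨
      (∃ u v w : ℂ, u ∈ TriLattice ∧ v ∈ TriLattice ∧ w ∈ TriLattice ∧
        ‖u - v‖ = 1 ∧ ‖v - w‖ = 1 ∧ ‖u - w‖ = 1 ∧
        c = (u + v + w) / 3) := by
  have hρ0 : (1 - omg ^ 2) * c ∈ TriLattice := by
    rw [← h, exp_two_pi_I_div_three]
    exact ⟨0, TriLattice.zero_mem, by ring⟩
  obtain ⟨t, ht, r, hr0, hr3, rfl⟩ := exists_eq_add_mul_one_add_omg_div_three hρ0
  interval_cases r
  · left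
    simpa using ht
  · right
    simp only [Int.cast_one, one_mul]
    exact isFaceCentroid_add_one_add_omg_div_three ht
  · right
    simp only [Int.cast_ofNat]
    exact isFaceCentroid_add_two_mul_one_add_omg_div_three ht
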